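/- In an unweighted undirected graph G with unique (tie-broken) shortest paths, for a source s and target v, fix the shortest path π(s,v) and for each edge e_i ∈ π(s,v) let D_i be the detour of the replacement path P_{s,v,{e_i}} = π(s,x_i) ∘ D_i ∘ π(y_i,v), where x_i, y_i ∈ π(s,v) with e_i ∈ π(x_i,y_i), D_i is internally vertex-disjoint from π(s,v), and x_i is chosen closest to s among all optimal replacement paths. Then for two detours D₁, D₂ with y₁ < x₂ (non-nested configuration), D₁ and D₂ are vertex-disjoint. -/

import Mathlib

/-!
If the detours met at a vertex `u`, exchanging their halves at `u` would give the walks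
`π(s,x₀) ∘ D₀[x₀,u] ∘ D₁[u,x₁] ∘ π(x₁,v)`, avoiding `e₀`, and
`π(s,y₀) ∘ D₀[y₀,u] ∘ D₁[u,y₁] ∘ π(y₁,v)`, avoiding `e₁`; by optimality of the replacement
paths they weigh at least `w(P₀)` and `w(P₁)`. Yet together they weigh
`w(P₀) + w(P₁) - 2 w(π(y₀,x₁))`, which is smaller because `y₀ < x₁` and weights are positive.
-/

/-- The `W`-weight of a walk: the sum of the weights of its edges. -/
def walkWeight {V : Type*} (W : Sym2 V → ℝ) {G : SimpleGraph V} {u v : V}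
    (p : G.Walk u v) : ℝ := (p.edges.map W).sum

/-- Position of a vertex along a walk (index in its support list); vertices of `π(s,v)` are
ordered by distance from `s`, and `vpos π u < vpos π u'` means `u` is closer to `s`. -/
def vpos {V : Type*} [DecidableEq V] {G : SimpleGraph V} {s v : V}
    (π : G.Walk s v) (u : V) : ℕ := π.support.idxOf u

open SimpleGraph Walk

section WalkWeight

variable {V : Type*} {G : SimpleGraph V} {W : Sym2 V → ℝ}

lemma walkWeight_append {u v w : V} (p : G.Walk u v) (q : G.Walk v w) :
    walkWeight W (p.append q) = walkWeight W p + walkWeight W q := by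
  simp [walkWeight, edges_append]

lemma walkWeight_reverse {u v : V} (p : G.Walk u v) :
    walkWeight W p.reverse = walkWeight W p := by
  simp [walkWeight, edges_reverse, List.sum_reverse]

lemma walkWeight_nonneg (hW : ∀ e, 0 ≤ W e) {u v : V} (p : G.Walk u v) :
    0 ≤ walkWeight W p :=
  List.sum_nonneg fun _ hr => by
    obtain ⟨e, -, rfl⟩ := List.mem_map.1 hr
    exact hW e

lemma walkWeight_pos (hW : ∀ e, 0 < W e) {u v : V} (p : G.Walk u v) (huv : u ≠ v) :
    0 < walkWeight W p := by
  cases p with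
  | nil => exact absurd rfl huv
  | cons _ q =>
    simp only [walkWeight, edges_cons, List.map_cons, List.sum_cons]
    exact add_pos_of_pos_of_nonneg (hW _) (walkWeight_nonneg (fun e => (hW e).le) q)

variable [DecidableEq V]

lemma walkWeight_takeUntil_add_dropUntil {u v w : V} (p : G.Walk u v) (hw : w ∈ p.support) :
    walkWeight W (p.takeUntil w hw) + walkWeight W (p.dropUntil w hw) = walkWeight W p := by
  rw [← walkWeight_append, take_spec]

lemma walkWeight_bypass_le (hW : ∀ e, 0 ≤ W e) {u v : V} (p : G.Walk u v) :
    walkWeight W p.bypass ≤ walkWeight W p := by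
  obtain ⟨l, hperm, hsub⟩ :=
    List.subperm_of_subset p.bypass_isPath.isTrail.edges_nodup p.edges_bypass_subset_edges
  calc walkWeight W p.bypass = (l.map W).sum := by rw [walkWeight, (hperm.map W).sum_eq]
    _ ≤ (p.edges.map W).sum := (hsub.map W).sum_le_sum fun _ hr => by
        obtain ⟨e, -, rfl⟩ := List.mem_map.1 hr
        exact hW e

lemma le_walkWeight_of_forall_isPath (hW : ∀ e, 0 ≤ W e) {u v : V} {e : Sym2 V} {c : ℝ}
    (h : ∀ R : G.Walk u v, R.IsPath → e ∉ R.edges → c ≤ walkWeight W R)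
    (p : G.Walk u v) (hp : e ∉ p.edges) : c ≤ walkWeight W p :=
  (h p.bypass p.bypass_isPath fun he => hp (p.edges_bypass_subset_edges he)).trans
    (walkWeight_bypass_le hW p)

end WalkWeight

section Position

variable {V : Type*} [DecidableEq V] {G : SimpleGraph V} {s v b b' w z : V} (π : G.Walk s v)

lemma vpos_eq_length_takeUntil (hw : w ∈ π.support) : vpos π w = (π.takeUntil w hw).length :=
  (π.length_takeUntil hw).symm

lemma vpos_le_of_mem_support_takeUntil (hz : z ∈ π.support)
    (hw : w ∈ (π.takeUntil z hz).support) : vpos π w ≤ vpos π z := by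
  rw [vpos_eq_length_takeUntil π (π.support_takeUntil_subset_support hz hw),
    vpos_eq_length_takeUntil π hz, ← π.takeUntil_takeUntil hz hw]
  exact length_takeUntil_le_length _ _

lemma mem_support_takeUntil_of_vpos_le (hz : z ∈ π.support) (hw : w ∈ π.support)
    (h : vpos π w ≤ vpos π z) : w ∈ (π.takeUntil z hz).support := by
  rw [← π.getVert_support_idxOf hw,
    ← π.getVert_takeUntil hz (by rw [π.length_takeUntil hz]; exact h)]
  exact getVert_mem_support _ _

lemma vpos_le_of_mem_support_dropUntil (hπ : π.IsPath) (hz : z ∈ π.support)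
    (hw : w ∈ (π.dropUntil z hz).support) : vpos π z ≤ vpos π w := by
  by_contra! h
  have hwz : w ≠ z := by rintro rfl; exact h.false
  have hwt := mem_support_takeUntil_of_vpos_le π hz
    (π.support_dropUntil_subset_support hz hw) h.le
  rw [← (π.dropUntil z hz).cons_tail_support, List.mem_cons] at hw
  have hnodup := hπ.support_nodup
  rw [← π.take_spec hz, support_append] at hnodup
  exact List.disjoint_of_nodup_append hnodup hwt (hw.resolve_left hwz)

lemma walkWeight_takeUntil_lt_of_vpos_lt {W : Sym2 V → ℝ} (hW : ∀ e, 0 < W e)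
    (hw : w ∈ π.support) (hz : z ∈ π.support) (h : vpos π w < vpos π z) :
    walkWeight W (π.takeUntil w hw) < walkWeight W (π.takeUntil z hz) := by
  have hwz := mem_support_takeUntil_of_vpos_le π hz hw h.le
  have hne : w ≠ z := by rintro rfl; exact h.false
  rw [← (π.takeUntil z hz).take_spec hwz, walkWeight_append, π.takeUntil_takeUntil hz hwz]
  linarith [walkWeight_pos hW ((π.takeUntil z hz).dropUntil w hwz) hne]

lemma notMem_edges_takeUntil_of_vpos_lt (hz : z ∈ π.support) (h : vpos π z < vpos π b') :
    s(b, b') ∉ (π.takeUntil z hz).edges := fun he =>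
  (vpos_le_of_mem_support_takeUntil π hz (snd_mem_support_of_mem_edges _ he)).not_gt h

lemma notMem_edges_dropUntil_of_vpos_lt (hπ : π.IsPath) (hz : z ∈ π.support)
    (h : vpos π b < vpos π z) : s(b, b') ∉ (π.dropUntil z hz).edges := fun he =>
  (vpos_le_of_mem_support_dropUntil π hπ hz (fst_mem_support_of_mem_edges _ he)).not_gt h

end Position

section Detour

variable {V : Type*} {G : SimpleGraph V} {W : Sym2 V → ℝ} {s v x y : V}

lemma notMem_edges_of_forall_mem_support (π : G.Walk s v) (D : G.Walk x y) {b b' : V}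
    (hD : ∀ w ∈ D.support, w ∈ π.support → w = x ∨ w = y)
    (hb : b ∈ π.support) (hbx : b ≠ x) (hby : b ≠ y) : s(b, b') ∉ D.edges := fun he =>
  (hD b (fst_mem_support_of_mem_edges _ he) hb).elim hbx hby

variable [DecidableEq V]

def replacementWalk (π : G.Walk s v) (hx : x ∈ π.support) (hy : y ∈ π.support)
    (D : G.Walk x y) : G.Walk s v :=
  (π.takeUntil x hx).append (D.append (π.dropUntil y hy))

variable (π : G.Walk s v) (hx : x ∈ π.support) (hy : y ∈ π.support) (D : G.Walk x y)

lemma walkWeight_replacementWalk :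
    walkWeight W (replacementWalk π hx hy D) =
      walkWeight W (π.takeUntil x hx) + walkWeight W D + walkWeight W (π.dropUntil y hy) := by
  rw [replacementWalk, walkWeight_append, walkWeight_append, add_assoc]

lemma notMem_edges_replacementWalk (hπ : π.IsPath) {b b' : V} (hxb : vpos π x < vpos π b')
    (hby : vpos π b < vpos π y) (hD : s(b, b') ∉ D.edges) :
    s(b, b') ∉ (replacementWalk π hx hy D).edges := by
  simp only [replacementWalk, edges_append, List.mem_append, not_or]
  exact ⟨notMem_edges_takeUntil_of_vpos_lt π hx hxb, hD,
    notMem_edges_dropUntil_of_vpos_lt π hπ hy hby⟩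

end Detour

section Crossing

variable {V : Type*} [DecidableEq V] {G : SimpleGraph V} {W : Sym2 V → ℝ}
  {x₀ y₀ x₁ y₁ u : V} (D₀ : G.Walk x₀ y₀) (D₁ : G.Walk x₁ y₁)
  (hu₀ : u ∈ D₀.support) (hu₁ : u ∈ D₁.support)

def crossTake : G.Walk x₀ x₁ := (D₀.takeUntil u hu₀).append (D₁.takeUntil u hu₁).reverse

def crossDrop : G.Walk y₀ y₁ := (D₀.dropUntil u hu₀).reverse.append (D₁.dropUntil u hu₁)

lemma walkWeight_crossTake_add_crossDrop :
    walkWeight W (crossTake D₀ D₁ hu₀ hu₁) + walkWeight W (crossDrop D₀ D₁ hu₀ hu₁) =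
      walkWeight W D₀ + walkWeight W D₁ := by
  simp only [crossTake, crossDrop, walkWeight_append, walkWeight_reverse]
  rw [← walkWeight_takeUntil_add_dropUntil D₀ hu₀, ← walkWeight_takeUntil_add_dropUntil D₁ hu₁]
  ring

lemma notMem_edges_crossTake {e : Sym2 V} (h₀ : e ∉ D₀.edges) (h₁ : e ∉ D₁.edges) :
    e ∉ (crossTake D₀ D₁ hu₀ hu₁).edges := by
  simp only [crossTake, edges_append, edges_reverse, List.mem_append, List.mem_reverse, not_or]
  exact ⟨fun he => h₀ (D₀.edges_takeUntil_subset_edges hu₀ he),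
    fun he => h₁ (D₁.edges_takeUntil_subset_edges hu₁ he)⟩

lemma notMem_edges_crossDrop {e : Sym2 V} (h₀ : e ∉ D₀.edges) (h₁ : e ∉ D₁.edges) :
    e ∉ (crossDrop D₀ D₁ hu₀ hu₁).edges := by
  simp only [crossDrop, edges_append, edges_reverse, List.mem_append, List.mem_reverse, not_or]
  exact ⟨fun he => h₀ (D₀.edges_dropUntil_subset_edges hu₀ he),
    fun he => h₁ (D₁.edges_dropUntil_subset_edges hu₁ he)⟩

lemma walkWeight_replacementWalk_cross {s v : V} (π : G.Walk s v)
    (hx₀ : x₀ ∈ π.support) (hy₀ : y₀ ∈ π.support) (hx₁ : x₁ ∈ π.support) (hy₁ : y₁ ∈ π.support) :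
    walkWeight W (replacementWalk π hx₀ hx₁ (crossTake D₀ D₁ hu₀ hu₁)) +
        walkWeight W (replacementWalk π hy₀ hy₁ (crossDrop D₀ D₁ hu₀ hu₁)) +
        2 * (walkWeight W (π.takeUntil x₁ hx₁) - walkWeight W (π.takeUntil y₀ hy₀)) =
      walkWeight W (replacementWalk π hx₀ hy₀ D₀) +
        walkWeight W (replacementWalk π hx₁ hy₁ D₁) := by
  simp only [walkWeight_replacementWalk]
  linarith [walkWeight_crossTake_add_crossDrop (W := W) D₀ D₁ hu₀ hu₁,
    walkWeight_takeUntil_add_dropUntil (W := W) π hy₀,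
    walkWeight_takeUntil_add_dropUntil (W := W) π hx₁]

end Crossing

theorem nonnested_detours_disjoint_general {V : Type*} [DecidableEq V]
    (G : SimpleGraph V) (W : Sym2 V → ℝ) (hW : ∀ e, 0 < W e)
    (s v : V) (π : G.Walk s v) (hπ : π.IsPath)
    (x y a a' : Fin 2 → V)
    (hx : ∀ i, x i ∈ π.support) (hy : ∀ i, y i ∈ π.support)
    (ha : ∀ i, s(a i, a' i) ∈ π.edges)
    (hconsec : ∀ i, vpos π (a' i) = vpos π (a i) + 1)
    (hbetween : ∀ i, vpos π (x i) ≤ vpos π (a i) ∧ vpos π (a' i) ≤ vpos π (y i))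
    (D : (i : Fin 2) → G.Walk (x i) (y i))
    (hintern : ∀ i, ∀ u ∈ (D i).support, u ∈ π.support → u = x i ∨ u = y i)
    (hPavoid : ∀ i, s(a i, a' i) ∉
      ((π.takeUntil (x i) (hx i)).append ((D i).append (π.dropUntil (y i) (hy i)))).edges)
    (hPopt : ∀ i, ∀ R : G.Walk s v, R.IsPath → s(a i, a' i) ∉ R.edges →
      walkWeight W
        ((π.takeUntil (x i) (hx i)).append ((D i).append (π.dropUntil (y i) (hy i)))) ≤
      walkWeight W R)
    (horder : vpos π (y 0) < vpos π (x 1)) :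
    ∀ u ∈ (D 0).support, u ∉ (D 1).support := by
  intro u hu₀ hu₁
  obtain ⟨hxa₀, hay₀⟩ := hbetween 0
  obtain ⟨hxa₁, hay₁⟩ := hbetween 1
  have hc₀ := hconsec 0
  have hc₁ := hconsec 1
  have hD₀e₀ : s(a 0, a' 0) ∉ (D 0).edges := fun he => hPavoid 0 (by simp [edges_append, he])
  have hD₁e₁ : s(a 1, a' 1) ∉ (D 1).edges := fun he => hPavoid 1 (by simp [edges_append, he])
  have hD₁e₀ : s(a 0, a' 0) ∉ (D 1).edges := Sym2.eq_swap ▸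
    notMem_edges_of_forall_mem_support π (D 1) (hintern 1) (snd_mem_support_of_mem_edges _ (ha 0))
      (ne_of_apply_ne (vpos π) (by omega)) (ne_of_apply_ne (vpos π) (by omega))
  have hD₀e₁ : s(a 1, a' 1) ∉ (D 0).edges :=
    notMem_edges_of_forall_mem_support π (D 0) (hintern 0) (fst_mem_support_of_mem_edges _ (ha 1))
      (ne_of_apply_ne (vpos π) (by omega)) (ne_of_apply_ne (vpos π) (by omega))
  have hP₀ : walkWeight W (replacementWalk π (hx 0) (hy 0) (D 0)) ≤
      walkWeight W (replacementWalk π (hx 0) (hx 1) (crossTake (D 0) (D 1) hu₀ hu₁)) :=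
    le_walkWeight_of_forall_isPath (fun e => (hW e).le) (hPopt 0) _
      (notMem_edges_replacementWalk π _ _ _ hπ (by omega) (by omega)
        (notMem_edges_crossTake _ _ _ _ hD₀e₀ hD₁e₀))
  have hP₁ : walkWeight W (replacementWalk π (hx 1) (hy 1) (D 1)) ≤
      walkWeight W (replacementWalk π (hy 0) (hy 1) (crossDrop (D 0) (D 1) hu₀ hu₁)) :=
    le_walkWeight_of_forall_isPath (fun e => (hW e).le) (hPopt 1) _
      (notMem_edges_replacementWalk π _ _ _ hπ (by omega) (by omega)
        (notMem_edges_crossDrop _ _ _ _ hD₀e₁ hD₁e₁))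
  linarith [walkWeight_replacementWalk_cross (W := W) (D 0) (D 1) hu₀ hu₁ π
      (hx 0) (hy 0) (hx 1) (hy 1),
    walkWeight_takeUntil_lt_of_vpos_lt π hW (hy 0) (hx 1) horder]

/-- Setup of single-failure replacement-path detours: `π = π(s,v)` is the
unique shortest path; for `i ∈ {0,1}`, the failed edge is `e_i = s(a i, a' i) ∈ π` lying on
`π` between `x i` and `y i`; the replacement path
`P_i = π(s, x_i) ∘ D_i ∘ π(y_i, v)` is a shortest `s–v` path avoiding `e_i`, the detour
`D_i` is internally vertex-disjoint from `π`, and its starting point `x i` is the divergence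
point closest to `s` among all optimal replacement paths (hypothesis `hmin`).  Shortest
paths in every edge-deleted subgraph are unique under `W` (hypothesis `huniq`).
Conclusion: if the detours are non-nested, i.e. `y 0 < x 1` on `π`, then `D 0` and `D 1`
are vertex-disjoint. -/
theorem nonnested_detours_disjoint {V : Type*} [DecidableEq V]
    (G : SimpleGraph V) (W : Sym2 V → ℝ) (hW : ∀ e, 0 < W e)
    (huniq : ∀ (s' : Set (Sym2 V)) (u w : V) (p q : G.Walk u w), p.IsPath → q.IsPath →
      (∀ f ∈ p.edges, f ∉ s') → (∀ f ∈ q.edges, f ∉ s') →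
      (∀ r : G.Walk u w, r.IsPath → (∀ f ∈ r.edges, f ∉ s') →
        walkWeight W p ≤ walkWeight W r) →
      (∀ r : G.Walk u w, r.IsPath → (∀ f ∈ r.edges, f ∉ s') →
        walkWeight W q ≤ walkWeight W r) →
      p = q)
    (s v : V) (π : G.Walk s v) (hπ : π.IsPath)
    (hπopt : ∀ R : G.Walk s v, R.IsPath → walkWeight W π ≤ walkWeight W R)
    (x y a a' : Fin 2 → V)
    (hx : ∀ i, x i ∈ π.support) (hy : ∀ i, y i ∈ π.support)
    (ha : ∀ i, s(a i, a' i) ∈ π.edges)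
    (hconsec : ∀ i, vpos π (a' i) = vpos π (a i) + 1)
    (hbetween : ∀ i, vpos π (x i) ≤ vpos π (a i) ∧ vpos π (a' i) ≤ vpos π (y i))
    (D : (i : Fin 2) → G.Walk (x i) (y i))
    (hDpath : ∀ i, (D i).IsPath)
    (hintern : ∀ i, ∀ u ∈ (D i).support, u ∈ π.support → u = x i ∨ u = y i)
    (hPpath : ∀ i,
      ((π.takeUntil (x i) (hx i)).append ((D i).append (π.dropUntil (y i) (hy i)))).IsPath)
    (hPavoid : ∀ i, s(a i, a' i) ∉
      ((π.takeUntil (x i) (hx i)).append ((D i).append (π.dropUntil (y i) (hy i)))).edges)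
    (hPopt : ∀ i, ∀ R : G.Walk s v, R.IsPath → s(a i, a' i) ∉ R.edges →
      walkWeight W
        ((π.takeUntil (x i) (hx i)).append ((D i).append (π.dropUntil (y i) (hy i)))) ≤
      walkWeight W R)
    (hmin : ∀ i, ∀ (u : V) (hu : u ∈ π.support) (R : G.Walk u v),
      ((π.takeUntil u hu).append R).IsPath →
      s(a i, a' i) ∉ ((π.takeUntil u hu).append R).edges →
      walkWeight W ((π.takeUntil u hu).append R) ≤
        walkWeight W
          ((π.takeUntil (x i) (hx i)).append ((D i).append (π.dropUntil (y i) (hy i)))) →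
      0 < R.length → R.getVert 1 ∉ π.support →
      vpos π (x i) ≤ vpos π u)
    (horder : vpos π (y 0) < vpos π (x 1)) :
    ∀ u ∈ (D 0).support, u ∉ (D 1).support :=
  nonnested_detours_disjoint_general G W hW s v π hπ x y a a' hx hy ha hconsec hbetween D hintern
    hPavoid hPopt horder
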